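/- If a 2×2 matrix over Z_p[t,t⁻¹] that is a product of powers of ρ(Δ3²) = t³·Id and ρ(σ1), specifically t^{3m}·ρ(σ1)^n, equals the identity matrix, then m = 0 and n = 0. -/

import Mathlib

open LaurentPolynomial

/-- `T` is injective over a nontrivial ring. -/
lemma Tinj {R : Type*} [CommSemiring R] [Nontrivial R] {a b : ℤ}
    (h : (T a : R[T;T⁻¹]) = T b) : a = b := by
  have := (AddMonoidAlgebra.single_left_inj (one_ne_zero : (1 : R) ≠ 0)).mp h
  exact this

/-- powers of a unit whose value is `T a`. -/
lemma unit_T_zpow {R : Type*} [CommSemiring R] (s : (R[T;T⁻¹])ˣ) (a : ℤ)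
    (hs : (s : R[T;T⁻¹]) = T a) : ∀ k : ℤ, ((s ^ k : (R[T;T⁻¹])ˣ) : R[T;T⁻¹]) = T (a * k) := by
  have hinv : ((s⁻¹ : (R[T;T⁻¹])ˣ) : R[T;T⁻¹]) = T (-a) := by
    have h1 : (s : R[T;T⁻¹]) * T (-a) = 1 := by
      rw [hs, ← T_add, add_neg_cancel, T_zero]
    calc ((s⁻¹ : (R[T;T⁻¹])ˣ) : R[T;T⁻¹])
        = ((s⁻¹ : (R[T;T⁻¹])ˣ) : R[T;T⁻¹]) * ((s : R[T;T⁻¹]) * T (-a)) := by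
          rw [h1, mul_one]
      _ = (((s⁻¹ : (R[T;T⁻¹])ˣ) : R[T;T⁻¹]) * (s : R[T;T⁻¹])) * T (-a) := by ring
      _ = T (-a) := by rw [Units.inv_mul, one_mul]
  intro k
  induction k using Int.induction_on with
  | zero => simp
  | succ i ih =>
      rw [zpow_add_one, Units.val_mul, ih, hs, ← T_add]
      ring_nf
  | pred i ih =>
      rw [zpow_sub_one, Units.val_mul, ih, hinv, ← T_add]
      ring_nf

/-- If `t^{3m} · ρ(σ₁)^n` (a product of powers of `ρ(Δ₃²) = t³·Id` and the
Burau matrix of `σ₁` over `Z_p[t,t⁻¹]`) is the identity matrix, then `m = 0`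
and `n = 0`.  The matrix `ρ(σ₁) = [[-t,0],[1,1]]` is realized as a unit of the
matrix ring so that its integer powers make sense. -/
theorem burau3_sigma1_power_trivial (p : ℕ) (hp : 2 ≤ p)
    (u : (Matrix (Fin 2) (Fin 2) (LaurentPolynomial (ZMod p)))ˣ)
    (hu : (u : Matrix (Fin 2) (Fin 2) (LaurentPolynomial (ZMod p))) =
      !![-T 1, 0; 1, 1])
    (m n : ℤ)
    (h : (T (3 * m) : LaurentPolynomial (ZMod p)) •
        ((u ^ n : (Matrix (Fin 2) (Fin 2) (LaurentPolynomial (ZMod p)))ˣ) :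
          Matrix (Fin 2) (Fin 2) (LaurentPolynomial (ZMod p))) = 1) :
    m = 0 ∧ n = 0 := by
  haveI : Fact (1 < p) := ⟨hp⟩
  set R := LaurentPolynomial (ZMod p) with hR
  set M := Matrix (Fin 2) (Fin 2) R with hM
  -- u^k fixes the vector ![0,1]
  have h1 : (u : M).mulVec ![0, 1] = ![0, 1] := by
    rw [hu]; funext i; fin_cases i <;>
      simp [Matrix.mulVec, dotProduct, Fin.sum_univ_two]
  have hinv : ((u⁻¹ : Mˣ) : M).mulVec ![0, 1] = ![0, 1] := by
    conv_lhs => rw [← h1, Matrix.mulVec_mulVec, Units.inv_mul, Matrix.one_mulVec]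
  have hfix : ∀ k : ℤ, ((u ^ k : Mˣ) : M).mulVec ![0, 1] = ![0, 1] := by
    intro k
    induction k using Int.induction_on with
    | zero => simp [Matrix.one_mulVec]
    | succ i ih =>
        rw [zpow_add_one, Units.val_mul, ← Matrix.mulVec_mulVec, h1, ih]
    | pred i ih =>
        rw [zpow_sub_one, Units.val_mul, ← Matrix.mulVec_mulVec, hinv, ih]
  -- apply h to ![0,1]
  have h2 := congrArg (fun A : M => A.mulVec ![0, 1]) h
  simp only [Matrix.smul_mulVec, hfix n, Matrix.one_mulVec] at h2
  have h3 : (T (3 * m) : R) = T 0 := by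
    have := congrFun h2 1
    simpa using this
  have hm : m = 0 := by
    have := Tinj h3
    omega
  refine ⟨hm, ?_⟩
  -- hence u^n = 1 as a unit
  rw [hm, mul_zero, T_zero, one_smul] at h
  have hun : (u ^ n : Mˣ) = 1 := Units.ext h
  -- pass to determinants
  have hdet : ((Units.map (Matrix.detMonoidHom) u : Rˣ)) ^ n = 1 := by
    rw [← map_zpow, hun, map_one]
  set d : Rˣ := Units.map (Matrix.detMonoidHom) u with hd
  have hdval : (d : R) = -T 1 := by
    simp [hd, Units.coe_map, hu, Matrix.detMonoidHom, Matrix.det_fin_two_of]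
  have hd2 : ((d ^ 2 : Rˣ) : R) = T 2 := by
    rw [Units.val_pow_eq_pow_val, hdval]
    rw [show ((-T 1 : R)) ^ 2 = T 1 * T 1 by ring, ← T_add]; norm_num
  have h2n : ((d ^ 2 : Rˣ)) ^ n = 1 := by
    rw [← zpow_natCast, ← zpow_mul, mul_comm, zpow_mul, hdet, one_zpow]
  have := unit_T_zpow (d ^ 2) 2 hd2 n
  rw [h2n] at this
  have h4 : (T (2 * n) : R) = T 0 := by
    simpa using this.symm
  have := Tinj h4
  omega
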